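/- arXiv:2604.21177 — 2 statements merged into one kernel-verified Lean document; each statement's English description precedes it below -/
import Mathlib

section
/- Performance difference lemma for discounted MDPs: for a finite MDP with cost c, transition kernel P, discount γ ∈ [0,1), initial distribution μ, and any two stationary policies π, π', J(π) − J(π') = (1/(1−γ)) ∑_s d^{π'}(s) ∑_a π'(a|s) A^π(s, a), where d^{π'} is the (1−γ)-normalized discounted state occupancy of π', and A^π(s,a) = V^π(s) − Q^π(s,a) is the advantage of π (costs, so advantage has reversed sign). -/
open Finset

theorem stmt_9 {S A : Type} [Fintype S] [Fintype A]
    (γ : ℝ) (hγ0 : 0 ≤ γ) (hγ1 : γ < 1)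
    (c : S → A → ℝ) (P : S → A → S → ℝ) (μ : S → ℝ)
    (π π' : S → A → ℝ)
    (hP : ∀ s a, (∀ s', 0 ≤ P s a s') ∧ ∑ s', P s a s' = 1)
    (hπ : ∀ s, (∀ a, 0 ≤ π s a) ∧ ∑ a, π s a = 1)
    (hπ' : ∀ s, (∀ a, 0 ≤ π' s a) ∧ ∑ a, π' s a = 1)
    (hμ : (∀ s, 0 ≤ μ s) ∧ ∑ s, μ s = 1)
    (V V' : S → ℝ) (Q : S → A → ℝ) (d' : S → ℝ)
    (hV : ∀ s, V s = ∑ a, π s a * (c s a + γ * ∑ s', P s a s' * V s'))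
    (hQ : ∀ s a, Q s a = c s a + γ * ∑ s', P s a s' * V s')
    (hV' : ∀ s, V' s = ∑ a, π' s a * (c s a + γ * ∑ s', P s a s' * V' s'))
    (hd' : ∀ s, d' s = (1 - γ) * μ s + γ * ∑ s', ∑ a, d' s' * π' s' a * P s' a s) :
    (∑ s, μ s * V s) - (∑ s, μ s * V' s) =
      (1 / (1 - γ)) * ∑ s, d' s * ∑ a, π' s a * (V s - Q s a) := by
  have hne : (1 : ℝ) - γ ≠ 0 := by linarith
  set g : S → ℝ := fun s => V s - V' s with hg
  have key : ∀ s, ∑ a, π' s a * (V s - Q s a)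
      = g s - γ * ∑ s', (∑ a, π' s a * P s a s') * g s' := by
    intro s
    have h1 := (hπ' s).2
    have e1 : ∑ a, π' s a * (V s - Q s a)
        = (∑ a, π' s a) * V s - ∑ a, π' s a * Q s a := by
      rw [Finset.sum_mul, ← Finset.sum_sub_distrib]
      exact Finset.sum_congr rfl fun a _ => by ring
    have e2 : ∑ a, π' s a * Q s a
        = ∑ a, π' s a * c s a + γ * ∑ a, π' s a * ∑ s', P s a s' * V s' := by
      rw [Finset.mul_sum, ← Finset.sum_add_distrib]
      exact Finset.sum_congr rfl fun a _ => by rw [hQ]; ring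
    have e3 : V' s
        = ∑ a, π' s a * c s a + γ * ∑ a, π' s a * ∑ s', P s a s' * V' s' := by
      rw [hV', Finset.mul_sum, ← Finset.sum_add_distrib]
      exact Finset.sum_congr rfl fun a _ => by ring
    have e4 : ∑ a, π' s a * ∑ s', P s a s' * V s'
        - ∑ a, π' s a * ∑ s', P s a s' * V' s'
        = ∑ s', (∑ a, π' s a * P s a s') * g s' := by
      rw [← Finset.sum_sub_distrib]
      have : ∀ a, π' s a * ∑ s', P s a s' * V s' - π' s a * ∑ s', P s a s' * V' s'
          = ∑ s', π' s a * P s a s' * g s' := by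
        intro a
        rw [Finset.mul_sum, Finset.mul_sum, ← Finset.sum_sub_distrib]
        exact Finset.sum_congr rfl fun s' _ => by simp only [hg]; ring
      rw [Finset.sum_congr rfl fun a _ => this a, Finset.sum_comm]
      exact Finset.sum_congr rfl fun s' _ => by rw [Finset.sum_mul]
    rw [e1, e2, h1, one_mul]
    have : V' s - (∑ a, π' s a * c s a) =
        γ * ∑ a, π' s a * ∑ s', P s a s' * V' s' := by rw [e3]; ring
    simp only [hg]
    nlinarith [e4]
  have main : ∑ s, d' s * ∑ a, π' s a * (V s - Q s a) = (1 - γ) * ∑ s, μ s * g s := by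
    have e5 : ∑ s, d' s * ∑ a, π' s a * (V s - Q s a)
        = ∑ s, d' s * g s - γ * ∑ s, ∑ s', d' s * (∑ a, π' s a * P s a s') * g s' := by
      rw [Finset.mul_sum, ← Finset.sum_sub_distrib]
      refine Finset.sum_congr rfl fun s _ => ?_
      rw [key s, Finset.mul_sum, Finset.mul_sum]
      rw [mul_sub, Finset.mul_sum]
      congr 1
      exact Finset.sum_congr rfl fun s' _ => by ring
    have e6 : γ * ∑ s, ∑ s', d' s * (∑ a, π' s a * P s a s') * g s'
        = ∑ s', (d' s' - (1 - γ) * μ s') * g s' := by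
      rw [Finset.sum_comm, Finset.mul_sum]
      refine Finset.sum_congr rfl fun s' _ => ?_
      have : d' s' - (1 - γ) * μ s' = γ * ∑ s, ∑ a, d' s * π' s a * P s a s' := by
        rw [hd' s']; ring
      rw [this]
      have inner : ∀ x : S, (d' x * ∑ a, π' x a * P x a s') * g s'
          = (∑ a, d' x * π' x a * P x a s') * g s' := by
        intro x; congr 1; rw [Finset.mul_sum]
        exact Finset.sum_congr rfl fun a _ => by ring
      rw [Finset.sum_congr rfl fun x _ => inner x, ← Finset.sum_mul]; ring
    rw [e5, e6]
    have e7 : ∑ s', (d' s' - (1 - γ) * μ s') * g s'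
        = ∑ s', d' s' * g s' - (1 - γ) * ∑ s', μ s' * g s' := by
      rw [Finset.mul_sum, ← Finset.sum_sub_distrib]
      exact Finset.sum_congr rfl fun s _ => by ring
    rw [e7]; ring
  rw [main]
  have : ∑ s, μ s * g s = ∑ s, μ s * V s - ∑ s, μ s * V' s := by
    rw [← Finset.sum_sub_distrib]
    exact Finset.sum_congr rfl fun s _ => by simp only [hg]; ring
  rw [this]
  field_simp
end

section
/- In the two-state s-rectangular RMDP with uncertainty set {P₁, P₂}, for the policy π with π(a₁|s₀) = p, the robust total cost equals J(p) = (γ/(1−γ)) max{p, 1−p}, and J satisfies the gradient dominance inequality: for every p ∈ [0,1] and every s ∈ ∂J(p), J(p) − min_{p'∈[0,1]} J(p') ≤ max_{p'∈[0,1]} (p − p') s. -/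
theorem stmt_18 (γ : ℝ) (hγ0 : 0 < γ) (hγ1 : γ < 1)
    (J : ℝ → ℝ)
    (hJ : ∀ p, J p = max ((1 - p) * γ / (1 - γ)) (p * γ / (1 - γ))) :
    (∀ p, J p = γ / (1 - γ) * max p (1 - p)) ∧
    (∀ p ∈ Set.Icc (0:ℝ) 1, ∀ s : ℝ,
      (∀ q ∈ Set.Icc (0:ℝ) 1, J p + s * (q - p) ≤ J q) →
      J p - sInf (J '' Set.Icc (0:ℝ) 1) ≤ sSup ((fun q => (p - q) * s) '' Set.Icc (0:ℝ) 1)) := by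
  have hc : (0:ℝ) ≤ γ / (1 - γ) := div_nonneg hγ0.le (by linarith)
  constructor
  · intro p
    rw [hJ p, mul_max_of_nonneg _ _ hc, max_comm]
    congr 1 <;> ring
  · intro p hp s hs
    set M := max (p * s) ((p - 1) * s) with hM
    -- key bound: for q ∈ [0,1], (p - q) * s ≤ M
    have key : ∀ q ∈ Set.Icc (0:ℝ) 1, (p - q) * s ≤ M := by
      intro q hq
      have h1 : (p - q) * s = (1 - q) * (p * s) + q * ((p - 1) * s) := by ring
      rw [h1]
      calc (1 - q) * (p * s) + q * ((p - 1) * s)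
          ≤ (1 - q) * M + q * M := by
            gcongr
            · linarith [hq.2]
            · exact le_max_left _ _
            · exact hq.1
            · exact le_max_right _ _
        _ = M := by ring
    have hbdd : BddAbove ((fun q => (p - q) * s) '' Set.Icc (0:ℝ) 1) := by
      refine ⟨M, ?_⟩
      rintro y ⟨q, hq, rfl⟩
      exact key q hq
    have hne : ((fun q => (p - q) * s) '' Set.Icc (0:ℝ) 1).Nonempty :=
      ⟨(p - 0) * s, ⟨0, ⟨le_refl 0, zero_le_one⟩, rfl⟩⟩
    have hMle : M ≤ sSup ((fun q => (p - q) * s) '' Set.Icc (0:ℝ) 1) := by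
      apply max_le
      · have : (p - 0) * s ∈ (fun q => (p - q) * s) '' Set.Icc (0:ℝ) 1 :=
          ⟨0, ⟨le_refl 0, zero_le_one⟩, rfl⟩
        have := le_csSup hbdd this
        simpa using this
      · exact le_csSup hbdd ⟨1, ⟨zero_le_one, le_refl 1⟩, rfl⟩
    have hInf : J p - M ≤ sInf (J '' Set.Icc (0:ℝ) 1) := by
      apply le_csInf
      · exact ⟨J 0, ⟨0, ⟨le_refl 0, zero_le_one⟩, rfl⟩⟩
      · rintro y ⟨q, hq, rfl⟩
        have h1 := hs q hq
        have h2 := key q hq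
        nlinarith [h1, h2]
    linarith
end
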